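/- arXiv:2005.06230 — 2 statements merged into one kernel-verified Lean document; each statement's English description precedes it below -/
import Mathlib

section
/- In the ear setup, let α ∈ U₁ and β ∈ U₂, let K be a semifield and f : diag(P) → K any map. Then the map S defined by S(α,ζ,η,π₄,…,π_p) = (η,π₄,…,π_p) is a bijection from {π ∈ T(α→β) : π₂ = ζ and π₃ = η} to {ρ ∈ T(η→β) : ρ₂ ≠ ζ}, and every π in its domain satisfies (f(α,ζ)/f(ζ,η)) · f(S(π)) = f(π). -/
/-!
Common definitions: polygons with vertex set `ZMod n`, crossing of diagonals,
dissections, (weak) friezes with values in a semifield, and T-paths.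
-/

/-- A *semifield* in the sense of the paper: a set `K` with a commutative, associative
addition and a multiplication making `K` a commutative group, such that multiplication
distributes over addition.  (There is no zero and no subtraction.) -/
class PaperSemifield (K : Type*) extends CommGroup K, AddCommSemigroup K where
  mul_add' : ∀ a b c : K, a * (b + c) = a * b + a * c

/-- Position of the vertex `x` of the `n`-gon relative to the vertex `a`, going around
the polygon in the positive direction; `relPos n a x = 0` iff `x = a`. -/
def relPos (n : ℕ) (a x : ZMod n) : ℕ := (x - a).val

/-- The vertices `a, b, c, d` of the `n`-gon appear strictly in this cyclic order. -/
def CyclicallyOrdered (n : ℕ) (a b c d : ZMod n) : Prop :=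
  0 < relPos n a b ∧ relPos n a b < relPos n a c ∧ relPos n a c < relPos n a d

/-- The diagonals `{a,b}` and `{c,d}` of the `n`-gon *cross*: the four vertices are
distinct and appear in the cyclic order `a, c, b, d` or `a, d, b, c`. -/
def Crosses (n : ℕ) (a b c d : ZMod n) : Prop :=
  CyclicallyOrdered n a c b d ∨ CyclicallyOrdered n a d b c

/-- `{a, b}` is an edge of the `n`-gon, i.e. joins neighbouring vertices. -/
def IsEdge (n : ℕ) (a b : ZMod n) : Prop := b = a + 1 ∨ a = b + 1

/-- `{a, b}` is an internal diagonal of the `n`-gon. -/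
def IsInternalDiag (n : ℕ) (a b : ZMod n) : Prop := a ≠ b ∧ ¬ IsEdge n a b

/-- `w'` is the successor of `w` in the induced cyclic order of the subpolygon of the
`n`-gon with vertex set `W`. -/
def NextIn (n : ℕ) (W : Set (ZMod n)) (w w' : ZMod n) : Prop :=
  w ∈ W ∧ w' ∈ W ∧ w' ≠ w ∧ ∀ u ∈ W, relPos n w u = 0 ∨ relPos n w w' ≤ relPos n w u

/-- `D` is a dissection of the subpolygon of the `n`-gon with vertex set `W`: a set of
pairwise non-crossing diagonals of the subpolygon joining non-neighbouring vertices. -/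
def IsDissectionOf (n : ℕ) (W : Set (ZMod n)) (D : Set (Sym2 (ZMod n))) : Prop :=
  (∀ a b, s(a, b) ∈ D → a ∈ W ∧ b ∈ W ∧ a ≠ b ∧ ¬ NextIn n W a b ∧ ¬ NextIn n W b a) ∧
  (∀ a b c d, s(a, b) ∈ D → s(c, d) ∈ D → ¬ Crosses n a b c d)

/-- `D` is a dissection of the `n`-gon. -/
def IsDissection (n : ℕ) (D : Set (Sym2 (ZMod n))) : Prop :=
  IsDissectionOf n Set.univ D

/-- `f` is symmetric on pairs of vertices from `W`, i.e. represents a map defined on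
unordered diagonals of the subpolygon with vertex set `W`. -/
def SymmOn (n : ℕ) {K : Type*} (W : Set (ZMod n)) (f : ZMod n → ZMod n → K) : Prop :=
  ∀ a b, a ∈ W → b ∈ W → f a b = f b a

/-- The Ptolemy relation for `f` at the crossing diagonals `{a,b}` and `{c,d}`. -/
def PtolemyRel {n : ℕ} {K : Type*} [Mul K] [Add K]
    (f : ZMod n → ZMod n → K) (a b c d : ZMod n) : Prop :=
  f a b * f c d = f a c * f b d + f a d * f b c

/-- `f` is a weak frieze on the subpolygon with vertex set `W` with respect to `D`:
the Ptolemy relation holds whenever `{a,b}` and `{c,d}` are crossing diagonals of the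
subpolygon with `{c,d} ∈ D`. -/
def IsWeakFriezeOn (n : ℕ) {K : Type*} [Mul K] [Add K] (W : Set (ZMod n))
    (D : Set (Sym2 (ZMod n))) (f : ZMod n → ZMod n → K) : Prop :=
  ∀ a b c d : ZMod n, a ∈ W → b ∈ W → c ∈ W → d ∈ W →
    Crosses n a b c d → s(c, d) ∈ D → PtolemyRel f a b c d

/-- `f` is a weak frieze on the `n`-gon with respect to the dissection `D`. -/
def IsWeakFrieze (n : ℕ) {K : Type*} [Mul K] [Add K]
    (D : Set (Sym2 (ZMod n))) (f : ZMod n → ZMod n → K) : Prop :=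
  IsWeakFriezeOn n Set.univ D f

/-- `f` is a frieze on the subpolygon with vertex set `W`: the Ptolemy relation holds
for all crossing diagonals of the subpolygon. -/
def IsFriezeOn (n : ℕ) {K : Type*} [Mul K] [Add K] (W : Set (ZMod n))
    (f : ZMod n → ZMod n → K) : Prop :=
  ∀ a b c d : ZMod n, a ∈ W → b ∈ W → c ∈ W → d ∈ W →
    Crosses n a b c d → PtolemyRel f a b c d

/-- `f` is a frieze on the `n`-gon. -/
def IsFrieze (n : ℕ) {K : Type*} [Mul K] [Add K] (f : ZMod n → ZMod n → K) : Prop :=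
  IsFriezeOn n Set.univ f

/-- The vertices of the `n`-gon realised as a regular convex `n`-gon in the Euclidean
plane. -/
noncomputable def vtx (n : ℕ) (a : ZMod n) : ℝ × ℝ :=
  (Real.cos (2 * Real.pi * (a.val : ℝ) / n), Real.sin (2 * Real.pi * (a.val : ℝ) / n))

/-- The point with parameter `t` on the segment from `A` to `B`. -/
def segPt (A B : ℝ × ℝ) (t : ℝ) : ℝ × ℝ :=
  ((1 - t) * A.1 + t * B.1, (1 - t) * A.2 + t * B.2)

/-- In the regular realisation of the `n`-gon, the diagonal `{c,d}` crosses the diagonal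
`{a,b}` at the interior point with parameter `t` along the segment from `a` to `b`. -/
def CrossesAt (n : ℕ) (a b c d : ZMod n) (t : ℝ) : Prop :=
  0 < t ∧ t < 1 ∧ ∃ s : ℝ, 0 < s ∧ s < 1 ∧
    segPt (vtx n a) (vtx n b) t = segPt (vtx n c) (vtx n d) s

/-- `l` is a T-path from `a` to `b` with respect to `D` in the subpolygon of the `n`-gon
with vertex set `W`.  Writing `p = l.length` and `π_i = l.getD (i-1) 0` (so the paper's
`π_1, …, π_p` are the entries of `l`), the conditions are: the path starts at `a` and
ends at `b`, uses vertices of `W`; (i) the consecutive pairs are pairwise different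
diagonals; (ii) no step crosses a diagonal in `D`; (iii) the steps starting at an
even position (in the paper's 1-based numbering) are diagonals in `D` which cross the
diagonal `{a,b}` at pairwise different points progressing monotonically in the
direction from `a` to `b`. -/
def IsTPathOn (n : ℕ) (W : Set (ZMod n)) (D : Set (Sym2 (ZMod n))) (a b : ZMod n)
    (l : List (ZMod n)) : Prop :=
  2 ≤ l.length ∧
  l.getD 0 0 = a ∧
  l.getD (l.length - 1) 0 = b ∧
  (∀ i, i < l.length → l.getD i 0 ∈ W) ∧
  (∀ i, i + 1 < l.length → l.getD i 0 ≠ l.getD (i + 1) 0) ∧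
  (∀ i j, i < j → j + 1 < l.length →
    s(l.getD i 0, l.getD (i + 1) 0) ≠ s(l.getD j 0, l.getD (j + 1) 0)) ∧
  (∀ i, i + 1 < l.length → ∀ c d, s(c, d) ∈ D →
    ¬ Crosses n (l.getD i 0) (l.getD (i + 1) 0) c d) ∧
  (∀ i, Odd i → i + 1 < l.length → s(l.getD i 0, l.getD (i + 1) 0) ∈ D) ∧
  (∃ t : ℕ → ℝ,
    (∀ i, Odd i → i + 1 < l.length → CrossesAt n a b (l.getD i 0) (l.getD (i + 1) 0) (t i)) ∧
    (∀ i j, Odd i → Odd j → i < j → j + 1 < l.length → t i < t j))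

/-- `l` is a T-path from `a` to `b` with respect to `D` in the `n`-gon. -/
def IsTPath (n : ℕ) (D : Set (Sym2 (ZMod n))) (a b : ZMod n) (l : List (ZMod n)) : Prop :=
  IsTPathOn n Set.univ D a b l

open Classical in
/-- The (finite) set of all T-paths from `a` to `b` with respect to `D` in the
subpolygon with vertex set `W`.  (Any T-path has pairwise different steps, hence has
length at most `n * n + 1`, so this finite set contains all of them.) -/
noncomputable def TPathFinsetOn (n : ℕ) [NeZero n] (W : Set (ZMod n))
    (D : Set (Sym2 (ZMod n))) (a b : ZMod n) : Finset (List (ZMod n)) :=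
  ((Finset.range (n * n + 2)).biUnion fun k =>
    (Finset.univ : Finset (Fin k → ZMod n)).image List.ofFn).filter (IsTPathOn n W D a b)

/-- The (finite) set of all T-paths from `a` to `b` with respect to `D` in the `n`-gon. -/
noncomputable def TPathFinset (n : ℕ) [NeZero n] (D : Set (Sym2 (ZMod n))) (a b : ZMod n) :
    Finset (List (ZMod n)) :=
  TPathFinsetOn n Set.univ D a b

/-- The weight `f(π)` of a T-path `l`: the product of the values of `f` on the steps at
odd positions (1-based) divided by the product of the values on the steps at even
positions. -/
def pathWeight (n : ℕ) {K : Type*} [CommGroup K] (f : ZMod n → ZMod n → K)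
    (l : List (ZMod n)) : K :=
  (∏ i ∈ (Finset.range (l.length - 1)).filter (fun i => Even i),
      f (l.getD i 0) (l.getD (i + 1) 0)) /
  (∏ i ∈ (Finset.range (l.length - 1)).filter (fun i => Odd i),
      f (l.getD i 0) (l.getD (i + 1) 0))

/-- `f` satisfies the T-path formula with respect to `D` on the subpolygon with vertex
set `W`: for all vertices `a ≠ b` of the subpolygon, `f a b` is the sum of the weights
of all T-paths from `a` to `b`.  Since the semifield `K` has no zero element, the sum is
computed in `WithZero K` (the sum is in fact always a sum of a nonempty collection). -/
def SatisfiesTPathFormulaOn (n : ℕ) [NeZero n] {K : Type*} [PaperSemifield K]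
    (W : Set (ZMod n)) (D : Set (Sym2 (ZMod n))) (f : ZMod n → ZMod n → K) : Prop :=
  ∀ a b : ZMod n, a ∈ W → b ∈ W → a ≠ b →
    WithZero.coe (f a b) = ∑ l ∈ TPathFinsetOn n W D a b, WithZero.coe (pathWeight n f l)

/-- `f` satisfies the T-path formula with respect to `D` on the `n`-gon. -/
def SatisfiesTPathFormula (n : ℕ) [NeZero n] {K : Type*} [PaperSemifield K]
    (D : Set (Sym2 (ZMod n))) (f : ZMod n → ZMod n → K) : Prop :=
  SatisfiesTPathFormulaOn n Set.univ D f

/-- `W` is the vertex set of one of the subpolygons into which the pairwise non-crossing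
internal diagonals `E` divide the `n`-gon: `W` has at least three vertices, consecutive
vertices of `W` are joined by an edge of the polygon or by a diagonal in `E`, and no
diagonal in `E` cuts through `W`. -/
def IsCell (n : ℕ) (E : Set (Sym2 (ZMod n))) (W : Set (ZMod n)) : Prop :=
  3 ≤ W.ncard ∧
  (∀ w w', NextIn n W w w' → (w' = w + 1 ∨ s(w, w') ∈ E)) ∧
  (∀ c d, s(c, d) ∈ E → c ∈ W → d ∈ W → (NextIn n W c d ∨ NextIn n W d c))

/-!
Condition (iii) of a T-path is metric, but for a path whose odd steps lie in a dissection it is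
equivalent to a combinatorial one: every odd step `{c, d}` crosses `{a, b}`, and, seen from `a`,
it encloses all later odd steps. Indeed, of two non-crossing diagonals crossing `{a, b}`, one
encloses the other, and (by a signed-area computation in the regular `n`-gon) the enclosing one
meets `{a, b}` nearer to `a`.

Seen from `α ∈ U₁`, the vertices of `P₂` appear in the same order as seen from `η`, so for the
diagonals of `D`, which all live in `P₂`, the nesting conditions based at `α` and at `η` agree.
In a T-path `(α, ζ, η, π₄, …)` every later odd step is enclosed by `{π₄, π₅}`, which does not
end at `η = π₃`, so none of them ends at `η`, and they all cross `{η, β}`. Conversely a T-path from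
`η` never returns to `η`, so prepending `α, ζ` creates no repeated step as long as `ρ₂ ≠ ζ`.
-/

section RelPos

variable {n : ℕ}

@[simp] theorem relPos_self (a : ZMod n) : relPos n a a = 0 := by simp [relPos]

theorem relPos_eq_zero_iff {a x : ZMod n} : relPos n a x = 0 ↔ x = a := by
  rw [relPos, ZMod.val_eq_zero, sub_eq_zero]

theorem relPos_pos {a x : ZMod n} (h : x ≠ a) : 0 < relPos n a x :=
  Nat.pos_of_ne_zero (mt relPos_eq_zero_iff.1 h)

variable [NeZero n]

theorem relPos_lt (a x : ZMod n) : relPos n a x < n := ZMod.val_lt _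

theorem relPos_injective (a : ZMod n) : Function.Injective (relPos n a) := fun _ _ h =>
  sub_left_injective (ZMod.val_injective n h)

theorem relPos_add_relPos (a b c : ZMod n) :
    relPos n a b + relPos n b c = relPos n a c ∨
      relPos n a b + relPos n b c = relPos n a c + n := by
  have e : c - a = (b - a) + (c - b) := by ring
  rcases lt_or_ge (relPos n a b + relPos n b c) n with h | h
  · exact .inl (by simp only [relPos] at h ⊢; rw [e, ZMod.val_add_of_lt h])
  · exact .inr (by simp only [relPos] at h ⊢; rw [e]; exact ZMod.val_add_val_of_le h)

theorem relPos_eq_of_lt {a b x : ZMod n} (h : relPos n b x < relPos n b a) :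
    relPos n a x = relPos n b x + n - relPos n b a := by
  have := relPos_lt a x
  rcases relPos_add_relPos b a x with h' | h' <;> omega

theorem relPos_le_relPos_iff_of_lt {a b x y : ZMod n} (hx : relPos n b x < relPos n b a)
    (hy : relPos n b y < relPos n b a) :
    relPos n a x ≤ relPos n a y ↔ relPos n b x ≤ relPos n b y := by
  rw [relPos_eq_of_lt hx, relPos_eq_of_lt hy]
  have := relPos_lt b a
  omega

theorem relPos_lt_relPos_iff_of_lt {a b x y : ZMod n} (hx : relPos n b x < relPos n b a)
    (hy : relPos n b y < relPos n b a) :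
    relPos n a x < relPos n a y ↔ relPos n b x < relPos n b y := by
  simpa only [not_le] using (relPos_le_relPos_iff_of_lt hy hx).not

theorem relPos_lt_relPos_of_lt {a b x : ZMod n} (hx : 0 < relPos n a x)
    (hxb : relPos n a x < relPos n a b) : relPos n b a < relPos n b x := by
  have := relPos_add_relPos b a x
  have := relPos_add_relPos b a b
  simp only [relPos_self] at this
  omega

end RelPos

/-- Seen from `a`, the diagonal `{c', d'}` lies inside `{c, d}`. -/
def Encloses (n : ℕ) (a c d c' d' : ZMod n) : Prop :=
  relPos n a c ≤ relPos n a c' ∧ relPos n a d' ≤ relPos n a d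

theorem encloses_iff_of_lt {n : ℕ} [NeZero n] {a b c d c' d' : ZMod n}
    (hc : relPos n b c < relPos n b a) (hd : relPos n b d < relPos n b a)
    (hc' : relPos n b c' < relPos n b a) (hd' : relPos n b d' < relPos n b a) :
    Encloses n a c d c' d' ↔ Encloses n b c d c' d' := by
  rw [Encloses, Encloses, relPos_le_relPos_iff_of_lt hc hc', relPos_le_relPos_iff_of_lt hd' hd]

theorem cyclicallyOrdered_iff_of_lt {n : ℕ} [NeZero n] {a b c x d : ZMod n} (hcb : c ≠ b)
    (hc : relPos n b c < relPos n b a) (hx : relPos n b x < relPos n b a)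
    (hd : relPos n b d < relPos n b a) :
    CyclicallyOrdered n a c x d ↔ CyclicallyOrdered n b c x d := by
  have := relPos_pos hcb
  rw [CyclicallyOrdered, CyclicallyOrdered, relPos_lt_relPos_iff_of_lt hc hx,
    relPos_lt_relPos_iff_of_lt hx hd, relPos_eq_of_lt hc]
  have := relPos_lt b a
  omega

theorem encloses_or_encloses_of_not_crosses {n : ℕ} [NeZero n] {a b c d c' d' : ZMod n}
    (h : CyclicallyOrdered n a c b d) (h' : CyclicallyOrdered n a c' b d')
    (hnc : ¬ Crosses n c d c' d') : Encloses n a c d c' d' ∨ Encloses n a c' d' c d := by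
  unfold Crosses CyclicallyOrdered at *
  unfold Encloses
  have := relPos_lt a d
  have := relPos_lt a d'
  have := relPos_lt c c'
  have := relPos_lt c d
  have := relPos_lt c d'
  have := relPos_add_relPos a c c'
  have := relPos_add_relPos a c d
  have := relPos_add_relPos a c d'
  omega

section SignedArea

/-- Twice the signed area of the triangle `ABC`; positive iff `A, B, C` are oriented
counterclockwise. -/
def signedArea (A B C : ℝ × ℝ) : ℝ := (B.1 - A.1) * (C.2 - A.2) - (B.2 - A.2) * (C.1 - A.1)

theorem signedArea_swap (A B C : ℝ × ℝ) : signedArea A C B = -signedArea A B C := by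
  unfold signedArea; ring

theorem signedArea_eq_zero_of_eq_left {A B C : ℝ × ℝ} (h : C = A) : signedArea A B C = 0 := by
  subst h; unfold signedArea; ring

theorem signedArea_eq_zero_of_eq_right {A B C : ℝ × ℝ} (h : C = B) : signedArea A B C = 0 := by
  subst h; unfold signedArea; ring

theorem signedArea_segPt (A B C D : ℝ × ℝ) (t : ℝ) :
    signedArea A B (segPt C D t) = (1 - t) * signedArea A B C + t * signedArea A B D := by
  unfold signedArea segPt; ring

theorem exists_segPt_eq_segPt {A B C D : ℝ × ℝ}
    (hA : 0 < signedArea C D A) (hB : signedArea C D B < 0)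
    (hC : signedArea A B C < 0) (hD : 0 < signedArea A B D) :
    ∃ t s : ℝ, 0 < t ∧ t < 1 ∧ 0 < s ∧ s < 1 ∧ segPt A B t = segPt C D s := by
  set a := signedArea C D A
  set b := signedArea C D B
  set c := signedArea A B C
  set d := signedArea A B D
  -- `t` and `s` are the zeros of the affine maps `signedArea C D ·` on `AB` and
  -- `signedArea A B ·` on `CD`
  refine ⟨a / (a - b), c / (c - d), div_pos hA (by linarith), (div_lt_one (by linarith)).2
    (by linarith), div_pos_of_neg_of_neg hC (by linarith),
    (div_lt_one_of_neg (by linarith)).2 (by linarith), ?_⟩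
  have hab : a - b ≠ 0 := by linarith
  have hcd : c - d ≠ 0 := by linarith
  have hAB (x y : ℝ) : (1 - a / (a - b)) * x + a / (a - b) * y = (a * y - b * x) / (a - b) := by
    field_simp; ring
  have hCD (x y : ℝ) : (1 - c / (c - d)) * x + c / (c - d) * y = (c * y - d * x) / (c - d) := by
    field_simp; ring
  simp only [segPt, Prod.mk.injEq, hAB, hCD, div_eq_div_iff hab hcd]
  constructor <;> simp only [a, b, c, d, signedArea] <;> ring

open Real in
theorem sin_add_sin_sub_sin_add_pos {u v : ℝ} (hu : 0 < u) (hv : 0 < v) (huv : u + v < 2 * π) :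
    0 < sin u + sin v - sin (u + v) := by
  obtain ⟨x, rfl⟩ : ∃ x, u = 2 * x := ⟨u / 2, by ring⟩
  obtain ⟨y, rfl⟩ : ∃ y, v = 2 * y := ⟨v / 2, by ring⟩
  have key : sin (2 * x) + sin (2 * y) - sin (2 * x + 2 * y) = 4 * sin x * sin y * sin (x + y) := by
    rw [← mul_add, sin_two_mul, sin_two_mul, sin_two_mul, sin_add, cos_add]
    linear_combination (-2 * sin x * cos x) * sin_sq_add_cos_sq y +
      (-2 * sin y * cos y) * sin_sq_add_cos_sq x
  rw [key]
  have := sin_pos_of_pos_of_lt_pi (x := x) (by linarith) (by linarith [pi_pos])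
  have := sin_pos_of_pos_of_lt_pi (x := y) (by linarith) (by linarith [pi_pos])
  have := sin_pos_of_pos_of_lt_pi (x := x + y) (by linarith) (by linarith)
  positivity

end SignedArea

section Crossing

variable {n : ℕ}

theorem crossesAt_swap {a b c d : ZMod n} {t : ℝ} (h : CrossesAt n a b c d t) :
    CrossesAt n a b d c t := by
  obtain ⟨ht0, ht1, s, hs0, hs1, he⟩ := h
  refine ⟨ht0, ht1, 1 - s, by linarith, by linarith, ?_⟩
  rw [he]; simp only [segPt, Prod.mk.injEq]; constructor <;> ring

theorem crossesAt_of_sym2_eq {a b c d c' d' : ZMod n} {t : ℝ} (he : s(c, d) = s(c', d'))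
    (h : CrossesAt n a b c d t) : CrossesAt n a b c' d' t := by
  rcases Sym2.eq_iff.1 he with ⟨rfl, rfl⟩ | ⟨rfl, rfl⟩
  exacts [h, crossesAt_swap h]

variable [NeZero n]

open Real in
theorem sin_angle_sub_angle (a b : ZMod n) :
    sin (2 * π * b.val / n - 2 * π * a.val / n) = sin (2 * π * relPos n a b / n) := by
  have hn : (n : ℝ) ≠ 0 := Nat.cast_ne_zero.2 (NeZero.ne n)
  have hval (x : ZMod n) : relPos n 0 x = x.val := by simp [relPos]
  rcases relPos_add_relPos 0 a b with h | h <;> rw [hval, hval] at h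
  · have h' : (b.val : ℝ) = a.val + relPos n a b := by exact_mod_cast h.symm
    rw [h']; congr 1; field_simp; ring
  · have h' : (b.val : ℝ) = a.val + relPos n a b - n := by
      rw [eq_sub_iff_add_eq]; exact_mod_cast h.symm
    rw [← sin_sub_two_pi (2 * π * relPos n a b / n), h']; congr 1; field_simp; ring

open Real in
theorem signedArea_vtx_pos {a b c : ZMod n} (hab : 0 < relPos n a b)
    (hbc : relPos n a b < relPos n a c) : 0 < signedArea (vtx n a) (vtx n b) (vtx n c) := by
  have hsum : relPos n a b + relPos n b c = relPos n a c := by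
    have := relPos_lt b c; rcases relPos_add_relPos a b c with h | h <;> omega
  have hexpand : signedArea (vtx n a) (vtx n b) (vtx n c) =
      sin (2 * π * b.val / n - 2 * π * a.val / n) + sin (2 * π * c.val / n - 2 * π * b.val / n)
        - sin (2 * π * c.val / n - 2 * π * a.val / n) := by
    simp only [sin_sub, signedArea, vtx]; ring
  have hn : (0 : ℝ) < n := Nat.cast_pos.2 (Nat.pos_of_ne_zero (NeZero.ne n))
  have hsumR : (relPos n a b : ℝ) + relPos n b c = relPos n a c := by exact_mod_cast hsum
  have hac : (relPos n a c : ℝ) < n := by exact_mod_cast relPos_lt a c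
  rw [hexpand, sin_angle_sub_angle, sin_angle_sub_angle, sin_angle_sub_angle, ← hsumR,
    mul_add, add_div]
  apply sin_add_sin_sub_sin_add_pos
  · have : (0 : ℝ) < relPos n a b := by exact_mod_cast hab
    positivity
  · have : (0 : ℝ) < relPos n b c := by exact_mod_cast (show 0 < relPos n b c by omega)
    positivity
  · rw [← add_div, ← mul_add, hsumR, div_lt_iff₀ hn]
    nlinarith [pi_pos]

theorem signedArea_vtx_neg {a b c : ZMod n} (hac : 0 < relPos n a c)
    (hcb : relPos n a c < relPos n a b) : signedArea (vtx n a) (vtx n b) (vtx n c) < 0 := by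
  rw [signedArea_swap, neg_lt_zero]
  exact signedArea_vtx_pos hac hcb

theorem signedArea_vtx_trichotomy {a b : ZMod n} (hab : a ≠ b) (c : ZMod n) :
    ((c = a ∨ c = b) ∧ signedArea (vtx n a) (vtx n b) (vtx n c) = 0) ∨
    (0 < relPos n a c ∧ relPos n a c < relPos n a b ∧
      signedArea (vtx n a) (vtx n b) (vtx n c) < 0) ∨
    (relPos n a b < relPos n a c ∧ 0 < signedArea (vtx n a) (vtx n b) (vtx n c)) := by
  by_cases hca : c = a
  · exact .inl ⟨.inl hca, signedArea_eq_zero_of_eq_left (congrArg (vtx n) hca)⟩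
  by_cases hcb : c = b
  · exact .inl ⟨.inr hcb, signedArea_eq_zero_of_eq_right (congrArg (vtx n) hcb)⟩
  have hc := relPos_pos hca
  have hb := relPos_pos hab.symm
  rcases lt_or_gt_of_ne (mt (relPos_injective a ·) hcb) with h | h
  · exact .inr (.inl ⟨hc, h, signedArea_vtx_neg hc h⟩)
  · exact .inr (.inr ⟨h, signedArea_vtx_pos hb h⟩)

theorem signedArea_vtx_pos_of_outside {a c d x : ZMod n} (hc : 0 < relPos n a c)
    (hcd : relPos n a c < relPos n a d)
    (hx : relPos n a x < relPos n a c ∨ relPos n a d < relPos n a x) :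
    0 < signedArea (vtx n c) (vtx n d) (vtx n x) := by
  have := relPos_lt a d
  have := relPos_lt c d
  have := relPos_lt c x
  have := relPos_add_relPos a c d
  have := relPos_add_relPos a c x
  exact signedArea_vtx_pos (by omega) (by omega)

theorem signedArea_vtx_neg_of_inside {a c d x : ZMod n} (hcx : relPos n a c < relPos n a x)
    (hxd : relPos n a x < relPos n a d) : signedArea (vtx n c) (vtx n d) (vtx n x) < 0 := by
  have := relPos_lt c x
  have := relPos_add_relPos a c d
  have := relPos_add_relPos a c x
  exact signedArea_vtx_neg (by omega) (by omega)

theorem crossesAt_of_cyclicallyOrdered {a b c d : ZMod n} (h : CyclicallyOrdered n a c b d) :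
    ∃ t, CrossesAt n a b c d t := by
  obtain ⟨hc, hcb, hbd⟩ := h
  obtain ⟨t, s, ht0, ht1, hs0, hs1, he⟩ := exists_segPt_eq_segPt
    (signedArea_vtx_pos_of_outside hc (hcb.trans hbd) (.inl (by simpa using hc)))
    (signedArea_vtx_neg_of_inside hcb hbd) (signedArea_vtx_neg hc hcb)
    (signedArea_vtx_pos (hc.trans hcb) hbd)
  exact ⟨t, ht0, ht1, s, hs0, hs1, he⟩

theorem crosses_or_eq_of_crossesAt {a b c d : ZMod n} {t : ℝ} (hab : a ≠ b) (hcd : c ≠ d)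
    (h : CrossesAt n a b c d t) : Crosses n a b c d ∨ s(c, d) = s(a, b) := by
  obtain ⟨-, -, s, hs0, hs1, he⟩ := h
  have key : (1 - s) * signedArea (vtx n a) (vtx n b) (vtx n c) +
      s * signedArea (vtx n a) (vtx n b) (vtx n d) = 0 := by
    rw [← signedArea_segPt, ← he, signedArea_segPt, signedArea_eq_zero_of_eq_left rfl,
      signedArea_eq_zero_of_eq_right rfl]
    ring
  have hs1' : 0 < 1 - s := by linarith
  rcases signedArea_vtx_trichotomy hab c with ⟨hc, hC⟩ | ⟨hc0, hcb, hC⟩ | ⟨hbc, hC⟩ <;>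
  rcases signedArea_vtx_trichotomy hab d with ⟨hd, hD⟩ | ⟨hd0, hdb, hD⟩ | ⟨hbd, hD⟩
  · right
    rcases hc with rfl | rfl <;> rcases hd with rfl | rfl
    exacts [absurd rfl hcd, rfl, Sym2.eq_swap, absurd rfl hcd]
  all_goals first
    | exact .inl (.inl ⟨hc0, hcb, hbd⟩)
    | exact .inl (.inr ⟨hd0, hdb, hbc⟩)
    | exfalso; rw [hC] at key; nlinarith
    | exfalso; rw [hD] at key; nlinarith
    | exfalso; nlinarith [mul_pos hs1' hC, mul_pos hs0 hD]
    | exfalso; nlinarith [mul_neg_of_pos_of_neg hs1' hC, mul_neg_of_pos_of_neg hs0 hD]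

theorem crossesAt_lt_of_encloses {a b c d c' d' : ZMod n} {t t' : ℝ}
    (h' : CyclicallyOrdered n a c' b d')
    (henc : Encloses n a c d c' d') (hne : c ≠ c' ∨ d ≠ d')
    (ht : CrossesAt n a b c d t) (ht' : CrossesAt n a b c' d' t') : t < t' := by
  obtain ⟨-, -, s, hs0, hs1, he⟩ := ht
  obtain ⟨-, -, s', -, -, he'⟩ := ht'
  obtain ⟨hc', hcb', hbd'⟩ := h'
  obtain ⟨hcc, hdd⟩ := henc
  -- `signedArea C' D' X` is affine along segments: positive at `A`, negative at `B`, zero at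
  -- the crossing with `{c', d'}`, and positive at the crossing with `{c, d}`
  have out (x : ZMod n) (hx : relPos n a x < relPos n a c' ∨ relPos n a d' < relPos n a x) :=
    signedArea_vtx_pos_of_outside hc' (hcb'.trans hbd') hx
  have fA := out a (.inl (by simpa using hc'))
  have fB := signedArea_vtx_neg_of_inside hcb' hbd'
  have fC : 0 ≤ signedArea (vtx n c') (vtx n d') (vtx n c) := by
    rcases eq_or_ne c c' with rfl | hne
    · exact (signedArea_eq_zero_of_eq_left rfl).ge
    · exact (out c (.inl (hcc.lt_of_ne (mt (relPos_injective a ·) hne)))).le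
  have fD : 0 ≤ signedArea (vtx n c') (vtx n d') (vtx n d) := by
    rcases eq_or_ne d d' with rfl | hne
    · exact (signedArea_eq_zero_of_eq_right rfl).ge
    · exact (out d (.inr (hdd.lt_of_ne (mt (relPos_injective a ·) hne.symm)))).le
  have fP : 0 < (1 - s) * signedArea (vtx n c') (vtx n d') (vtx n c) +
      s * signedArea (vtx n c') (vtx n d') (vtx n d) := by
    rcases hne with hne | hne
    · nlinarith [out c (.inl (hcc.lt_of_ne (mt (relPos_injective a ·) hne)))]
    · nlinarith [out d (.inr (hdd.lt_of_ne (mt (relPos_injective a ·) hne.symm)))]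
  rw [← signedArea_segPt, ← he, signedArea_segPt] at fP
  have fP' := signedArea_segPt (vtx n c') (vtx n d') (vtx n a) (vtx n b) t'
  rw [he', signedArea_segPt, signedArea_eq_zero_of_eq_left rfl,
    signedArea_eq_zero_of_eq_right rfl] at fP'
  nlinarith

end Crossing

theorem exists_odd_step_mem {V : Type*} (l : List V) (x : V) {k : ℕ} (hk0 : 0 < k)
    (hk : k + 1 < l.length) :
    ∃ i, Odd i ∧ i + 1 < l.length ∧ l.getD k x ∈ s(l.getD i x, l.getD (i + 1) x) := by
  rcases Nat.even_or_odd k with ⟨m, rfl⟩ | hk'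
  · refine ⟨m + m - 1, ⟨m - 1, by omega⟩, by omega, ?_⟩
    rw [show m + m - 1 + 1 = m + m by omega]
    exact Sym2.mem_mk_right _ _
  · exact ⟨k, hk', hk, Sym2.mem_mk_left _ _⟩

section TPath

variable {n : ℕ} {W : Set (ZMod n)} {D : Set (Sym2 (ZMod n))} {a b : ZMod n}
  {l : List (ZMod n)}

def PairwiseNoncrossing (n : ℕ) (D : Set (Sym2 (ZMod n))) : Prop :=
  ∀ a b c d, s(a, b) ∈ D → s(c, d) ∈ D → ¬ Crosses n a b c d

/-- Condition (iii) of a T-path from `a` to `b`, as it appears in `IsTPathOn`. -/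
def HasOrderedCrossings (n : ℕ) (a b : ZMod n) (l : List (ZMod n)) : Prop :=
  ∃ t : ℕ → ℝ,
    (∀ i, Odd i → i + 1 < l.length → CrossesAt n a b (l.getD i 0) (l.getD (i + 1) 0) (t i)) ∧
    (∀ i j, Odd i → Odd j → i < j → j + 1 < l.length → t i < t j)

/-- The combinatorial form of condition (iii): the odd steps of `l`, oriented as `(c i, d i)`,
cross `{a, b}` with `c i` between `a` and `b`, and each encloses the later ones. -/
def OddStepsNest (n : ℕ) (a b : ZMod n) (l : List (ZMod n)) : Prop :=
  ∃ c d : ℕ → ZMod n, ∀ i, Odd i → i + 1 < l.length →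
    s(c i, d i) = s(l.getD i 0, l.getD (i + 1) 0) ∧ CyclicallyOrdered n a (c i) b (d i) ∧
    ∀ j, Odd j → i < j → j + 1 < l.length → Encloses n a (c i) (d i) (c j) (d j)

theorem IsTPathOn.exists_eq_cons (h : IsTPathOn n W D a b l) : ∃ ρ, l = a :: ρ := by
  obtain ⟨hlen, h0, -⟩ := h
  rcases l with _ | ⟨x, ρ⟩
  · simp at hlen
  · exact ⟨ρ, by rw [← h0]; rfl⟩

theorem IsTPathOn.getD_eq_or_mem_odd_step (h : IsTPathOn n W D a b l) {k : ℕ} (hk0 : 0 < k)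
    (hk : k < l.length) : l.getD k 0 = b ∨
      ∃ i, Odd i ∧ i + 1 < l.length ∧ l.getD k 0 ∈ s(l.getD i 0, l.getD (i + 1) 0) := by
  obtain ⟨-, -, hlast, -⟩ := h
  rcases Nat.lt_or_ge (k + 1) l.length with hk1 | hk1
  · exact .inr (exists_odd_step_mem l 0 hk0 hk1)
  · exact .inl (by rw [show k = l.length - 1 by omega]; exact hlast)

theorem IsTPathOn.forall_getD {P : ZMod n → Prop} (hP : ∀ c d, s(c, d) ∈ D → P c ∧ P d)
    (ha : P a) (hb : P b) (h : IsTPathOn n W D a b l) (k : ℕ) (hk : k < l.length) :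
    P (l.getD k 0) := by
  rcases Nat.eq_zero_or_pos k with rfl | hk0
  · exact h.2.1 ▸ ha
  rcases h.getD_eq_or_mem_odd_step hk0 hk with he | ⟨i, hi, hil, hmem⟩
  · exact he ▸ hb
  · obtain ⟨-, -, -, -, -, -, -, hodd, -⟩ := h
    have := hP _ _ (hodd i hi hil)
    rcases Sym2.mem_iff.1 hmem with he | he <;> rw [he]
    exacts [this.1, this.2]

variable [NeZero n]

theorem odd_step_ne_of_hasOrderedCrossings (hab : a ≠ b) (hD : PairwiseNoncrossing n D)
    (h0 : l.getD 0 0 = a) (hcons : ∀ i, i + 1 < l.length → l.getD i 0 ≠ l.getD (i + 1) 0)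
    (hdiff : ∀ i j, i < j → j + 1 < l.length →
      s(l.getD i 0, l.getD (i + 1) 0) ≠ s(l.getD j 0, l.getD (j + 1) 0))
    (hodd : ∀ i, Odd i → i + 1 < l.length → s(l.getD i 0, l.getD (i + 1) 0) ∈ D)
    (hcr : HasOrderedCrossings n a b l) (i : ℕ) (hi : Odd i) (hil : i + 1 < l.length) :
    s(l.getD i 0, l.getD (i + 1) 0) ≠ s(a, b) := by
  obtain ⟨t, ht, -⟩ := hcr
  intro he
  rcases eq_or_ne i 1 with rfl | hi1
  · -- the first two steps would both be `{a, b}`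
    have hl1 : l.getD 1 0 = b := by
      rcases Sym2.eq_iff.1 he with ⟨h1, -⟩ | ⟨h1, -⟩
      · exact absurd (h0.trans h1.symm) (hcons 0 (by omega))
      · exact h1
    refine hdiff 0 1 one_pos hil ?_
    show s(l.getD 0 0, l.getD 1 0) = s(l.getD 1 0, l.getD (1 + 1) 0)
    rw [he, h0, hl1]
  · -- the first odd step would cross `{a, b} ∈ D`
    have h3 : 3 ≤ i := by obtain ⟨k, rfl⟩ := hi; omega
    rcases crosses_or_eq_of_crossesAt hab (hcons 1 (by omega)) (ht 1 odd_one (by omega))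
      with hc | he1
    · exact hD a b _ _ (he ▸ hodd i hi hil) (hodd 1 odd_one (by omega)) hc
    · exact hdiff 1 i (by omega) hil (he1.trans he.symm)

theorem oddStepsNest_of_hasOrderedCrossings (hab : a ≠ b) (hD : PairwiseNoncrossing n D)
    (h0 : l.getD 0 0 = a) (hcons : ∀ i, i + 1 < l.length → l.getD i 0 ≠ l.getD (i + 1) 0)
    (hdiff : ∀ i j, i < j → j + 1 < l.length →
      s(l.getD i 0, l.getD (i + 1) 0) ≠ s(l.getD j 0, l.getD (j + 1) 0))
    (hodd : ∀ i, Odd i → i + 1 < l.length → s(l.getD i 0, l.getD (i + 1) 0) ∈ D)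
    (hcr : HasOrderedCrossings n a b l) : OddStepsNest n a b l := by
  classical
  have hne := odd_step_ne_of_hasOrderedCrossings hab hD h0 hcons hdiff hodd hcr
  obtain ⟨t, ht, hmono⟩ := hcr
  let c i := if CyclicallyOrdered n a (l.getD i 0) b (l.getD (i + 1) 0) then l.getD i 0
    else l.getD (i + 1) 0
  let d i := if CyclicallyOrdered n a (l.getD i 0) b (l.getD (i + 1) 0) then l.getD (i + 1) 0
    else l.getD i 0
  have horient (i : ℕ) (hi : Odd i) (hil : i + 1 < l.length) :
      s(c i, d i) = s(l.getD i 0, l.getD (i + 1) 0) ∧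
        CyclicallyOrdered n a (c i) b (d i) ∧ CrossesAt n a b (c i) (d i) (t i) := by
    have hcr := ht i hi hil
    rcases crosses_or_eq_of_crossesAt hab (hcons i hil) hcr with hc | he
    · by_cases ho : CyclicallyOrdered n a (l.getD i 0) b (l.getD (i + 1) 0)
      · simp only [c, d, if_pos ho, true_and]
        exact ⟨ho, hcr⟩
      · simp only [c, d, if_neg ho]
        exact ⟨Sym2.eq_swap, hc.resolve_left ho, crossesAt_swap hcr⟩
    · exact absurd he (hne i hi hil)
  refine ⟨c, d, fun i hi hil => ⟨(horient i hi hil).1, (horient i hi hil).2.1, ?_⟩⟩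
  intro j hj hij hjl
  obtain ⟨hei, hoi, hti⟩ := horient i hi hil
  obtain ⟨hej, hoj, htj⟩ := horient j hj hjl
  have hnc : ¬ Crosses n (c i) (d i) (c j) (d j) :=
    hD _ _ _ _ (hei ▸ hodd i hi hil) (hej ▸ hodd j hj hjl)
  refine (encloses_or_encloses_of_not_crosses hoi hoj hnc).resolve_right fun henc => ?_
  have hne' : c j ≠ c i ∨ d j ≠ d i := by
    by_contra! h
    exact hdiff i j hij hjl (by rw [← hei, ← hej, h.1, h.2])
  exact (hmono i j hi hj hij hjl).not_gt (crossesAt_lt_of_encloses hoi henc hne' htj hti)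

theorem IsTPathOn.oddStepsNest (hab : a ≠ b) (hD : PairwiseNoncrossing n D)
    (h : IsTPathOn n W D a b l) : OddStepsNest n a b l := by
  obtain ⟨-, h0, -, -, hcons, hdiff, -, hodd, hcr⟩ := h
  exact oddStepsNest_of_hasOrderedCrossings hab hD h0 hcons hdiff hodd hcr

theorem hasOrderedCrossings_of_oddStepsNest
    (hdiff : ∀ i j, i < j → j + 1 < l.length →
      s(l.getD i 0, l.getD (i + 1) 0) ≠ s(l.getD j 0, l.getD (j + 1) 0))
    (h : OddStepsNest n a b l) : HasOrderedCrossings n a b l := by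
  obtain ⟨c, d, h⟩ := h
  have hex : ∀ i, Odd i → i + 1 < l.length → ∃ u, CrossesAt n a b (c i) (d i) u :=
    fun i hi hil => crossesAt_of_cyclicallyOrdered (h i hi hil).2.1
  choose! t ht using hex
  refine ⟨t, fun i hi hil => crossesAt_of_sym2_eq (h i hi hil).1 (ht i hi hil), ?_⟩
  intro i j hi hj hij hjl
  have hil : i + 1 < l.length := by omega
  have hne : c i ≠ c j ∨ d i ≠ d j := by
    by_contra! he
    exact hdiff i j hij hjl (by rw [← (h i hi hil).1, ← (h j hj hjl).1, he.1, he.2])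
  exact crossesAt_lt_of_encloses (h j hj hjl).2.1 ((h i hi hil).2.2 j hj hij hjl) hne
    (ht i hi hil) (ht j hj hjl)

theorem IsTPathOn.getD_ne_left (hab : a ≠ b) (hD : PairwiseNoncrossing n D)
    (h : IsTPathOn n W D a b l) {k : ℕ} (hk0 : 0 < k) (hk : k < l.length) : l.getD k 0 ≠ a := by
  obtain ⟨c, d, hN⟩ := h.oddStepsNest hab hD
  rcases h.getD_eq_or_mem_odd_step hk0 hk with hb | ⟨i, hi, hil, hmem⟩
  · exact hb ▸ hab.symm
  obtain ⟨hs, ⟨hc, -, hbd⟩, -⟩ := hN i hi hil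
  rw [← hs, Sym2.mem_iff] at hmem
  intro hka
  rcases hmem with he | he
  · rw [← he, hka, relPos_self] at hc; exact lt_irrefl _ hc
  · rw [← he, hka, relPos_self] at hbd; exact Nat.not_lt_zero _ hbd

end TPath

section Ear

variable {n : ℕ} {D : Set (Sym2 (ZMod n))} {ζ η α β : ZMod n}

theorem ear_exists_eq_cons (hβζ : β ≠ ζ) {l : List (ZMod n)} (h : IsTPath n D α β l)
    (h1 : l.getD 1 0 = ζ) (h2 : l.getD 2 0 = η) : ∃ ρ, l = α :: ζ :: η :: ρ := by
  obtain ⟨hlen, h0, hlast, -⟩ := h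
  rcases l with _ | ⟨x, _ | ⟨y, _ | ⟨z, ρ⟩⟩⟩
  · simp at hlen
  · simp at hlen
  · exact absurd (hlast.symm.trans h1) hβζ
  · exact ⟨ρ, by rw [← h0, ← h1, ← h2]; rfl⟩

theorem steps_ne_cons_cons {ρ : List (ZMod n)} (hζη : ζ ≠ η)
    (hα : ∀ k < ρ.length + 1, (η :: ρ).getD k 0 ≠ α)
    (hη : ∀ k, 0 < k → k < ρ.length + 1 → (η :: ρ).getD k 0 ≠ η)
    (hne : (η :: ρ).getD 1 0 ≠ ζ)
    (hdiff : ∀ i j, i < j → j + 1 < (η :: ρ).length →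
      s((η :: ρ).getD i 0, (η :: ρ).getD (i + 1) 0) ≠ s((η :: ρ).getD j 0, (η :: ρ).getD (j + 1) 0))
    (i j : ℕ) (hij : i < j) (hj : j + 1 < (α :: ζ :: η :: ρ).length) :
    s((α :: ζ :: η :: ρ).getD i 0, (α :: ζ :: η :: ρ).getD (i + 1) 0) ≠
      s((α :: ζ :: η :: ρ).getD j 0, (α :: ζ :: η :: ρ).getD (j + 1) 0) := by
  have hl : (α :: ζ :: η :: ρ).length = ρ.length + 3 := rfl
  rcases i with _ | _ | i <;> rcases j with _ | _ | j
  all_goals try omega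
  · show s(α, ζ) ≠ s(ζ, η)
    have := hα 0 (by omega)
    rw [Ne, Sym2.eq_iff]
    tauto
  · intro he
    rcases Sym2.mem_iff.1 (he ▸ Sym2.mem_mk_left α ζ) with he | he
    exacts [hα j (by omega) he.symm, hα (j + 1) (by omega) he.symm]
  · intro he
    rcases Nat.eq_zero_or_pos j with rfl | hj0
    · rcases Sym2.eq_iff.1 he with ⟨he, -⟩ | ⟨he, -⟩
      exacts [hζη he, hne he.symm]
    · rcases Sym2.mem_iff.1 (he ▸ Sym2.mem_mk_right ζ η) with he | he
      exacts [hη j hj0 (by omega) he.symm, hη (j + 1) (by omega) (by omega) he.symm]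
  · exact hdiff i j (by omega) (by simpa using hj)

variable [NeZero n]

theorem not_crosses_of_relPos_le (hζα : relPos n η ζ < relPos n η α) {c d : ZMod n}
    (hc : relPos n η c ≤ relPos n η ζ) (hd : relPos n η d ≤ relPos n η ζ) :
    ¬ Crosses n α ζ c d := by
  have := relPos_eq_of_lt (a := α) (show relPos n η c < relPos n η α by omega)
  have := relPos_eq_of_lt (a := α) (show relPos n η d < relPos n η α by omega)
  have := relPos_eq_of_lt (a := α) hζα
  have := relPos_lt η α
  unfold Crosses CyclicallyOrdered
  omega

theorem ear_oddStepsNest_tail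
    (hD : PairwiseNoncrossing n D)
    (hV₂ : ∀ c d, s(c, d) ∈ D → relPos n η c ≤ relPos n η ζ ∧ relPos n η d ≤ relPos n η ζ)
    (hβζ : relPos n η β < relPos n η ζ) (hζα : relPos n η ζ < relPos n η α)
    {ρ : List (ZMod n)} (h : IsTPath n D α β (α :: ζ :: η :: ρ)) :
    OddStepsNest n η β (η :: ρ) := by
  obtain ⟨c, d, hN⟩ := h.oddStepsNest (by rintro rfl; omega) hD
  obtain ⟨-, -, -, -, hcons, hdiff, -, hodd, -⟩ := h
  have hl : (α :: ζ :: η :: ρ).length = ρ.length + 3 := rfl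
  have hcd (i : ℕ) (hi : Odd i) (hil : i + 1 < ρ.length + 3) :
      relPos n η (c i) < relPos n η α ∧ relPos n η (d i) < relPos n η α := by
    have := hV₂ _ _ ((hN i hi hil).1 ▸ hodd i hi hil)
    omega
  -- the odd steps after `{ζ, η}` avoid `η`: the first one by the T-path conditions,
  -- the later ones because the first one encloses them
  have hc3 (h3 : 3 + 1 < ρ.length + 3) : c 3 ≠ η := by
    intro he
    have hmem : η ∈ s((α :: ζ :: η :: ρ).getD 3 0, (α :: ζ :: η :: ρ).getD 4 0) := by
      rw [← (hN 3 (by decide) h3).1, ← he]; exact Sym2.mem_mk_left _ _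
    rcases Sym2.mem_iff.1 hmem with h | h
    · exact hcons 2 (by omega) h
    · exact hdiff 2 3 (by omega) h3 (by rw [← h]; exact Sym2.eq_swap)
  have hc (i : ℕ) (hi : Odd i) (h3 : 3 ≤ i) (hil : i + 1 < ρ.length + 3) : c i ≠ η := by
    rcases h3.eq_or_lt with rfl | h3
    · exact hc3 hil
    intro he
    have henc := ((hN 3 (by decide) (by omega)).2.2 i hi (by omega) hil).1
    rw [he, relPos_le_relPos_iff_of_lt (hcd 3 (by decide) (by omega)).1
      (by rw [relPos_self]; omega), relPos_self, Nat.le_zero] at henc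
    exact hc3 (by omega) (relPos_eq_zero_iff.1 henc)
  refine ⟨fun i => c (i + 2), fun i => d (i + 2), fun i hi hil => ?_⟩
  have hi2 : Odd (i + 2) := by simpa [parity_simps] using hi
  have hil' : i + 2 + 1 < ρ.length + 3 := by simpa using hil
  obtain ⟨hs, hord, henc⟩ := hN (i + 2) hi2 hil'
  obtain ⟨hci, hdi⟩ := hcd (i + 2) hi2 hil'
  refine ⟨hs, (cyclicallyOrdered_iff_of_lt (hc (i + 2) hi2 (by have := hi.pos; omega) hil') hci
    (hβζ.trans hζα) hdi).1 hord, fun j hj hij hjl => ?_⟩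
  have hj2 : Odd (j + 2) := by simpa [parity_simps] using hj
  have hjl' : j + 2 + 1 < ρ.length + 3 := by simpa using hjl
  obtain ⟨hcj, hdj⟩ := hcd (j + 2) hj2 hjl'
  exact (encloses_iff_of_lt hci hdi hcj hdj).1 (henc (j + 2) hj2 (by omega) hjl')

theorem ear_isTPath_tail
    (hD : PairwiseNoncrossing n D)
    (hV₂ : ∀ c d, s(c, d) ∈ D → relPos n η c ≤ relPos n η ζ ∧ relPos n η d ≤ relPos n η ζ)
    (hβ : 0 < relPos n η β) (hβζ : relPos n η β < relPos n η ζ)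
    (hζα : relPos n η ζ < relPos n η α) {ρ : List (ZMod n)}
    (h : IsTPath n D α β (α :: ζ :: η :: ρ)) :
    IsTPath n D η β (η :: ρ) ∧ (η :: ρ).getD 1 0 ≠ ζ := by
  have hN := ear_oddStepsNest_tail hD hV₂ hβζ hζα h
  obtain ⟨-, -, hlast, -, hcons, hdiff, hnc, hodd, -⟩ := h
  have hρ : 0 < ρ.length := by
    refine List.length_pos_iff.2 fun hρ => ?_
    subst hρ
    rw [← hlast] at hβ
    simp at hβ
  have hdiff' (i j : ℕ) (hij : i < j) (hj : j + 1 < (η :: ρ).length) :=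
    hdiff (i + 2) (j + 2) (by omega) (by simpa using hj)
  refine ⟨⟨by simp; omega, rfl, hlast, fun _ _ => trivial,
    fun i hi => hcons (i + 2) (by simpa using hi), hdiff',
    fun i hi => hnc (i + 2) (by simpa using hi),
    fun i hi hil => hodd (i + 2) (by simpa [parity_simps] using hi) (by simpa using hil),
    hasOrderedCrossings_of_oddStepsNest hdiff' hN⟩, fun he => hdiff 1 2 one_lt_two (by simpa) ?_⟩
  show s(ζ, η) = s(η, (η :: ρ).getD 1 0)
  rw [he, Sym2.eq_swap]

theorem ear_oddStepsNest_cons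
    (hV₂ : ∀ c d, s(c, d) ∈ D → relPos n η c ≤ relPos n η ζ ∧ relPos n η d ≤ relPos n η ζ)
    (hβ : 0 < relPos n η β) (hβζ : relPos n η β < relPos n η ζ)
    (hζα : relPos n η ζ < relPos n η α) {ρ : List (ZMod n)}
    (hodd : ∀ i, Odd i → i + 1 < (η :: ρ).length →
      s((η :: ρ).getD i 0, (η :: ρ).getD (i + 1) 0) ∈ D)
    (hN : OddStepsNest n η β (η :: ρ)) : OddStepsNest n α β (α :: ζ :: η :: ρ) := by
  obtain ⟨c, d, hN⟩ := hN
  have hl : (η :: ρ).length = ρ.length + 1 := rfl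
  have hcd (i : ℕ) (hi : Odd i) (hil : i + 1 < ρ.length + 1) :
      relPos n η (c i) < relPos n η α ∧ relPos n η (d i) < relPos n η α := by
    have := hV₂ _ _ ((hN i hi hil).1 ▸ hodd i hi hil)
    omega
  have hηα : relPos n η η < relPos n η α := by rw [relPos_self]; omega
  have hβα := hβζ.trans hζα
  refine ⟨fun i => if i = 1 then η else c (i - 2), fun i => if i = 1 then ζ else d (i - 2),
    fun i hi hil => ?_⟩
  rcases eq_or_ne i 1 with rfl | hi1
  · -- the first odd step `{ζ, η}` encloses all of `P₂`
    simp only [if_true]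
    refine ⟨Sym2.eq_swap, ⟨?_, ?_, ?_⟩, fun j hj hij hjl => ?_⟩
    · exact relPos_pos fun h => by simp [h] at hζα
    · exact (relPos_lt_relPos_iff_of_lt hηα hβα).2 (by simpa using hβ)
    · exact (relPos_lt_relPos_iff_of_lt hβα hζα).2 hβζ
    obtain ⟨j, rfl⟩ : ∃ j', j = j' + 2 := ⟨j - 2, by omega⟩
    have hj' : Odd j := by simpa [parity_simps] using hj
    have hjl' : j + 1 < ρ.length + 1 := by simpa using hjl
    obtain ⟨hcj, hdj⟩ := hcd j hj' hjl'
    simp only [show j + 2 ≠ 1 by omega, if_false, Nat.add_sub_cancel]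
    exact (encloses_iff_of_lt hηα hζα hcj hdj).2
      ⟨by simp, (hV₂ _ _ ((hN j hj' hjl').1 ▸ hodd j hj' hjl')).2⟩
  · obtain ⟨i, rfl⟩ : ∃ k, i = k + 2 := ⟨i - 2, by obtain ⟨k, rfl⟩ := hi; omega⟩
    have hi' : Odd i := by simpa [parity_simps] using hi
    have hil' : i + 1 < ρ.length + 1 := by simpa using hil
    obtain ⟨hs, hord, henc⟩ := hN i hi' hil'
    obtain ⟨hci, hdi⟩ := hcd i hi' hil'
    simp only [hi1, if_false, Nat.add_sub_cancel]
    have hciη : c i ≠ η := fun h => by simp [h, CyclicallyOrdered] at hord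
    refine ⟨hs, (cyclicallyOrdered_iff_of_lt hciη hci hβα hdi).2 hord, fun j hj hij hjl => ?_⟩
    obtain ⟨j, rfl⟩ : ∃ j', j = j' + 2 := ⟨j - 2, by omega⟩
    have hj' : Odd j := by simpa [parity_simps] using hj
    have hjl' : j + 1 < ρ.length + 1 := by simpa using hjl
    obtain ⟨hcj, hdj⟩ := hcd j hj' hjl'
    simp only [show j + 2 ≠ 1 by omega, if_false, Nat.add_sub_cancel]
    exact (encloses_iff_of_lt hci hdi hcj hdj).2 (henc j hj' (by omega) hjl')

theorem ear_isTPath_cons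
    (hD : PairwiseNoncrossing n D) (hζηD : s(ζ, η) ∈ D)
    (hV₂ : ∀ c d, s(c, d) ∈ D → relPos n η c ≤ relPos n η ζ ∧ relPos n η d ≤ relPos n η ζ)
    (hβ : 0 < relPos n η β) (hβζ : relPos n η β < relPos n η ζ)
    (hζα : relPos n η ζ < relPos n η α) {ρ : List (ZMod n)}
    (h : IsTPath n D η β (η :: ρ)) (hne : (η :: ρ).getD 1 0 ≠ ζ) :
    IsTPath n D α β (α :: ζ :: η :: ρ) := by
  have hηβ : η ≠ β := by rintro rfl; simp at hβ
  have hζη : ζ ≠ η := by rintro rfl; simp at hβζ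
  have hα (k : ℕ) (hk : k < ρ.length + 1) : (η :: ρ).getD k 0 ≠ α := fun he => by
    have := h.forall_getD (P := fun x => relPos n η x ≤ relPos n η ζ) hV₂ (by simp) hβζ.le k hk
    simp only [he] at this
    omega
  have hη (k : ℕ) (hk0 : 0 < k) (hk : k < ρ.length + 1) := h.getD_ne_left hηβ hD hk0 hk
  have hN := h.oddStepsNest hηβ hD
  obtain ⟨-, -, hlast, -, hcons, hdiff, hnc, hodd, -⟩ := h
  have hdiff' := steps_ne_cons_cons hζη hα hη hne hdiff
  refine ⟨by simp, rfl, hlast, fun _ _ => trivial, fun i hi => ?_, hdiff',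
    fun i hi c' d' hcd' => ?_, fun i hi hil => ?_,
    hasOrderedCrossings_of_oddStepsNest hdiff' (ear_oddStepsNest_cons hV₂ hβ hβζ hζα hodd hN)⟩
  · rcases i with _ | _ | i
    · exact fun (he : α = ζ) => by rw [he] at hζα; omega
    · exact hζη
    · exact hcons i (by simpa using hi)
  · rcases i with _ | _ | i
    · exact not_crosses_of_relPos_le hζα (hV₂ c' d' hcd').1 (hV₂ c' d' hcd').2
    · exact hD ζ η c' d' hζηD hcd'
    · exact hnc i (by simpa using hi) c' d' hcd'
  · rcases i with _ | _ | i
    · exact absurd hi (by decide)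
    · exact hζηD
    · exact hodd i (by simpa [parity_simps] using hi) (by simpa using hil)

end Ear

theorem pathWeight_cons_cons_cons {n : ℕ} {K : Type*} [CommGroup K] (f : ZMod n → ZMod n → K)
    (x y z : ZMod n) (ρ : List (ZMod n)) :
    pathWeight n f (x :: y :: z :: ρ) = f x y / f y z * pathWeight n f (z :: ρ) := by
  simp only [pathWeight, List.length_cons, Nat.add_sub_cancel, Finset.prod_filter,
    Finset.prod_range_succ' _ (ρ.length + 1), Finset.prod_range_succ' _ ρ.length,
    List.getD_cons_succ, List.getD_cons_zero, Nat.even_add_one, Nat.odd_add_one, not_not,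
    Even.zero, Nat.not_odd_zero, not_true_eq_false, not_false_eq_true, if_true, if_false, mul_one]
  rw [div_mul_div_comm, mul_comm (f x y), mul_comm (f y z)]

theorem ear_bijection_S_general
    (n : ℕ) (hn : 3 ≤ n) {K : Type*} [PaperSemifield K]
    (ζ η : ZMod n)
    (D D₂ : Set (Sym2 (ZMod n)))
    (hD : IsDissection n D)
    (hsplit : D = insert s(ζ, η) D₂)
    (hD₂ : IsDissectionOf n {ε : ZMod n | relPos n η ε ≤ relPos n η ζ} D₂)
    (α β : ZMod n)
    (hα : 0 < relPos n ζ α ∧ relPos n ζ α < relPos n ζ η)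
    (hβ : 0 < relPos n η β ∧ relPos n η β < relPos n η ζ)
    (f : ZMod n → ZMod n → K) :
    Set.BijOn (fun l : List (ZMod n) => l.drop 2)
      {l : List (ZMod n) | IsTPath n D α β l ∧ l.getD 1 0 = ζ ∧ l.getD 2 0 = η}
      {l : List (ZMod n) | IsTPath n D η β l ∧ l.getD 1 0 ≠ ζ} ∧
    ∀ l : List (ZMod n), IsTPath n D α β l → l.getD 1 0 = ζ → l.getD 2 0 = η →
      f α ζ / f ζ η * pathWeight n f (l.drop 2) = pathWeight n f l := by
  have : NeZero n := ⟨by omega⟩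
  have hζα := relPos_lt_relPos_of_lt hα.1 hα.2
  have hβζ : β ≠ ζ := by rintro rfl; omega
  have hζη : s(ζ, η) ∈ D := hsplit ▸ Set.mem_insert _ _
  have hV₂ (c d : ZMod n) (h : s(c, d) ∈ D) :
      relPos n η c ≤ relPos n η ζ ∧ relPos n η d ≤ relPos n η ζ := by
    rcases hsplit ▸ h with h | h
    · rcases Sym2.eq_iff.1 h with ⟨rfl, rfl⟩ | ⟨rfl, rfl⟩ <;> simp
    · exact ⟨(hD₂.1 c d h).1, (hD₂.1 c d h).2.1⟩
  refine ⟨⟨?_, ?_, ?_⟩, fun l hl h1 h2 => ?_⟩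
  · rintro l ⟨hl, h1, h2⟩
    obtain ⟨ρ, rfl⟩ := ear_exists_eq_cons hβζ hl h1 h2
    exact ear_isTPath_tail hD.2 hV₂ hβ.1 hβ.2 hζα hl
  · rintro l ⟨hl, h1, h2⟩ l' ⟨hl', h1', h2'⟩ he
    obtain ⟨ρ, rfl⟩ := ear_exists_eq_cons hβζ hl h1 h2
    obtain ⟨ρ', rfl⟩ := ear_exists_eq_cons hβζ hl' h1' h2'
    simpa using he
  · rintro σ ⟨hσ, hne⟩
    obtain ⟨ρ, rfl⟩ := hσ.exists_eq_cons
    exact ⟨α :: ζ :: η :: ρ, ⟨ear_isTPath_cons hD.2 hζη hV₂ hβ.1 hβ.2 hζα hσ hne, rfl, rfl⟩, rfl⟩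
  · obtain ⟨ρ, rfl⟩ := ear_exists_eq_cons hβζ hl h1 h2
    exact (pathWeight_cons_cons_cons f α ζ η ρ).symm

/-- **Ear setup.**  `D = {d} ⊔ D₂` is a dissection of the `n`-gon, where `d = {ζ,η}`
divides the polygon into subpolygons `P₁` (vertex set `V₁`, an ear, with interior
`U₁ = {ε : ζ < ε < η}`) and `P₂` (vertex set `V₂`, with interior `U₂ = {ε : η < ε < ζ}`),
and `D₂` is a dissection of `P₂`.  Let `α ∈ U₁`, `β ∈ U₂`, and let `f : diag(P) → K`
be any map.  The map `S : (α, ζ, η, π₄, …, π_p) ↦ (η, π₄, …, π_p)` is a bijection from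
`{π ∈ T(α→β) : π₂ = ζ, π₃ = η}` to `{ρ ∈ T(η→β) : ρ₂ ≠ ζ}`, and
`(f(α,ζ)/f(ζ,η)) · f(S(π)) = f(π)` for every `π` in its domain. -/
theorem ear_bijection_S
    (n : ℕ) (hn : 3 ≤ n) {K : Type*} [PaperSemifield K]
    (ζ η : ZMod n) (hζη : IsInternalDiag n ζ η)
    (D D₂ : Set (Sym2 (ZMod n)))
    (hD : IsDissection n D)
    (hsplit : D = insert s(ζ, η) D₂) (hdm : s(ζ, η) ∉ D₂)
    (hD₂ : IsDissectionOf n {ε : ZMod n | relPos n η ε ≤ relPos n η ζ} D₂)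
    (α β : ZMod n)
    (hα : 0 < relPos n ζ α ∧ relPos n ζ α < relPos n ζ η)
    (hβ : 0 < relPos n η β ∧ relPos n η β < relPos n η ζ)
    (f : ZMod n → ZMod n → K) (hf : SymmOn n Set.univ f) :
    Set.BijOn (fun l : List (ZMod n) => l.drop 2)
      {l : List (ZMod n) | IsTPath n D α β l ∧ l.getD 1 0 = ζ ∧ l.getD 2 0 = η}
      {l : List (ZMod n) | IsTPath n D η β l ∧ l.getD 1 0 ≠ ζ} ∧
    ∀ l : List (ZMod n), IsTPath n D α β l → l.getD 1 0 = ζ → l.getD 2 0 = η →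
      f α ζ / f ζ η * pathWeight n f (l.drop 2) = pathWeight n f l :=
  ear_bijection_S_general n hn ζ η D D₂ hD hsplit hD₂ α β hα hβ f
end

section
/- Let P be an n-gon (n ≥ 3), let d = {ζ,η} be an internal diagonal dividing P into subpolygons P₁ (vertex set V₁ = {ε : ζ ≤ ε ≤ η}) and P₂ (vertex set V₂ = {ε : η ≤ ε ≤ ζ}), and let D₁, D₂ be dissections of P₁, P₂, so that D = {d} ⊔ D₁ ⊔ D₂ is a dissection of P. Let K be a semifield, let f₁ : diag(P₁) → K and f₂ : diag(P₂) → K be weak friezes with respect to D₁ and D₂ respectively, with x := f₁(ζ,η) = f₂(ζ,η), and let f : diag(P) → K be the unique weak frieze with respect to D restricting to f₁ on diag(P₁) and to f₂ on diag(P₂). Then for all vertices α with ζ < α < η and β with η < β < ζ in the cyclic order, f(α,β) = x^{-1} · [ f₁(ζ,α)f₂(η,β) + f₂(ζ,β)f₁(η,α) ]. -/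
/-- Let the internal diagonal `d = {ζ,η}` divide the `n`-gon `P` into subpolygons `P₁`
(vertex set `V₁ = {ε : ζ ≤ ε ≤ η}`) and `P₂` (vertex set `V₂ = {ε : η ≤ ε ≤ ζ}`), let
`D_i` be a dissection of `P_i`, and let `f_i : diag(P_i) → K` be a weak frieze with
respect to `D_i`, with `x := f₁(ζ,η) = f₂(ζ,η)`.  If `f` is the glued weak frieze with
respect to `D = {d} ⊔ D₁ ⊔ D₂`, then for `ζ < α < η` and `η < β < ζ` one has
`f(α,β) = x⁻¹·[f₁(ζ,α)f₂(η,β) + f₂(ζ,β)f₁(η,α)]`. -/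
theorem glued_weak_frieze_formula
    (n : ℕ) (hn : 3 ≤ n) {K : Type*} [PaperSemifield K]
    (ζ η : ZMod n) (hζη : IsInternalDiag n ζ η)
    (D₁ D₂ : Set (Sym2 (ZMod n)))
    (hD₁ : IsDissectionOf n {ε : ZMod n | relPos n ζ ε ≤ relPos n ζ η} D₁)
    (hD₂ : IsDissectionOf n {ε : ZMod n | relPos n η ε ≤ relPos n η ζ} D₂)
    (f₁ f₂ : ZMod n → ZMod n → K)
    (hf₁_symm : SymmOn n {ε : ZMod n | relPos n ζ ε ≤ relPos n ζ η} f₁)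
    (hf₂_symm : SymmOn n {ε : ZMod n | relPos n η ε ≤ relPos n η ζ} f₂)
    (hf₁ : IsWeakFriezeOn n {ε : ZMod n | relPos n ζ ε ≤ relPos n ζ η} D₁ f₁)
    (hf₂ : IsWeakFriezeOn n {ε : ZMod n | relPos n η ε ≤ relPos n η ζ} D₂ f₂)
    (hx : f₁ ζ η = f₂ ζ η)
    (f : ZMod n → ZMod n → K) (hf_symm : SymmOn n Set.univ f)
    (hf : IsWeakFrieze n (insert s(ζ, η) (D₁ ∪ D₂)) f)
    (hrest₁ : ∀ a b : ZMod n, a ∈ {ε : ZMod n | relPos n ζ ε ≤ relPos n ζ η} →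
      b ∈ {ε : ZMod n | relPos n ζ ε ≤ relPos n ζ η} → a ≠ b → f a b = f₁ a b)
    (hrest₂ : ∀ a b : ZMod n, a ∈ {ε : ZMod n | relPos n η ε ≤ relPos n η ζ} →
      b ∈ {ε : ZMod n | relPos n η ε ≤ relPos n η ζ} → a ≠ b → f a b = f₂ a b) :
    ∀ α β : ZMod n,
      (0 < relPos n ζ α ∧ relPos n ζ α < relPos n ζ η) →
      (0 < relPos n η β ∧ relPos n η β < relPos n η ζ) →
      f α β = (f₁ ζ η)⁻¹ * (f₁ ζ α * f₂ η β + f₂ ζ β * f₁ η α) := by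

  intro α β hα hβ
  haveI : NeZero n := ⟨by omega⟩
  set V₁ : Set (ZMod n) := {ε : ZMod n | relPos n ζ ε ≤ relPos n ζ η}
  set V₂ : Set (ZMod n) := {ε : ZMod n | relPos n η ε ≤ relPos n η ζ}
  obtain ⟨ha0, hah⟩ := hα
  obtain ⟨hb0, hbz⟩ := hβ
  have hζne : ζ ≠ η := hζη.1
  have hnz : (η - ζ) ≠ 0 := sub_ne_zero.mpr (Ne.symm hζne)
  -- basic value facts
  have hh : relPos n ζ η = (η - ζ).val := rfl
  have hηζ : relPos n η ζ = n - relPos n ζ η := by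
    show (ζ - η).val = n - (η - ζ).val
    rw [show ζ - η = -(η - ζ) by ring, ZMod.neg_val, if_neg hnz]
  have hhn : relPos n ζ η < n := ZMod.val_lt _
  -- memberships
  have hαV₁ : α ∈ V₁ := le_of_lt hah
  have hζV₁ : ζ ∈ V₁ := by
    show relPos n ζ ζ ≤ _
    simp [relPos]
  have hηV₁ : η ∈ V₁ := le_refl (relPos n ζ η)
  have hβV₂ : β ∈ V₂ := le_of_lt hbz
  have hηV₂ : η ∈ V₂ := by
    show relPos n η η ≤ _
    simp [relPos]
  have hζV₂ : ζ ∈ V₂ := le_refl (relPos n η ζ)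
  -- inequalities for distinctness
  have hαζ : α ≠ ζ := by
    intro h; rw [h] at ha0; simp [relPos] at ha0
  have hαη : α ≠ η := by
    intro h; rw [h] at hah; exact lt_irrefl _ hah
  have hβη : β ≠ η := by
    intro h; rw [h] at hb0; simp [relPos] at hb0
  have hβζ : β ≠ ζ := by
    intro h; rw [h] at hbz; exact lt_irrefl _ hbz
  -- crossing of {α, β} and {ζ, η}
  have hrel_αη : relPos n α η = relPos n ζ η - relPos n ζ α := by
    show (η - α).val = (η - ζ).val - (α - ζ).val
    rw [show η - α = (η - ζ) - (α - ζ) by ring, ZMod.val_sub (le_of_lt hah)]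
  have hrel_αζ : relPos n α ζ = n - relPos n ζ α := by
    show (ζ - α).val = n - (α - ζ).val
    rw [show ζ - α = -(α - ζ) by ring, ZMod.neg_val, if_neg]
    intro h
    have : relPos n ζ α = 0 := by simp [relPos, h]
    omega
  have hrel_ηβ : relPos n η β < n - relPos n ζ η := by
    rw [hηζ] at hbz; exact hbz
  have hrel_αβ : relPos n α β = relPos n η β + (relPos n ζ η - relPos n ζ α) := by
    show (β - α).val = (β - η).val + ((η - ζ).val - (α - ζ).val)
    rw [show β - α = (β - η) + ((η - ζ) - (α - ζ)) by ring,
      ZMod.val_add_of_lt, ZMod.val_sub (le_of_lt hah)]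
    rw [ZMod.val_sub (le_of_lt hah)]
    simp only [relPos] at hrel_ηβ hah
    omega
  have hcross : Crosses n α β ζ η := by
    right
    refine ⟨?_, ?_, ?_⟩ <;>
    · simp only [relPos] at hrel_αη hrel_αζ hrel_ηβ hrel_αβ hah hhn hb0 ha0 ⊢
      omega
  -- Ptolemy relation
  have hpt := hf α β ζ η (Set.mem_univ _) (Set.mem_univ _) (Set.mem_univ _)
    (Set.mem_univ _) hcross (Set.mem_insert _ _)
  simp only [PtolemyRel] at hpt
  rw [show f ζ η = f₁ ζ η from hrest₁ ζ η hζV₁ hηV₁ hζne,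
    show f α ζ = f₁ ζ α by
      rw [hrest₁ α ζ hαV₁ hζV₁ hαζ]; exact hf₁_symm α ζ hαV₁ hζV₁,
    show f β η = f₂ η β by
      rw [hrest₂ β η hβV₂ hηV₂ hβη]; exact hf₂_symm β η hβV₂ hηV₂,
    show f α η = f₁ η α by
      rw [hrest₁ α η hαV₁ hηV₁ hαη]; exact hf₁_symm α η hαV₁ hηV₁,
    show f β ζ = f₂ ζ β by
      rw [hrest₂ β ζ hβV₂ hζV₂ hβζ]; exact hf₂_symm β ζ hβV₂ hζV₂] at hpt
  calc f α β = (f₁ ζ η)⁻¹ * (f α β * f₁ ζ η) := by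
        rw [mul_comm (f α β), ← mul_assoc, inv_mul_cancel, one_mul]
    _ = (f₁ ζ η)⁻¹ * (f₁ ζ α * f₂ η β + f₂ ζ β * f₁ η α) := by rw [hpt, mul_comm (f₁ η α)]
end
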